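/- With the perforated-domain setup below, define for ε > 0 the hole boundaries Σ_ε = ⋃_{i ∈ I_ε} ε·(i + ∂B), where ∂B is the topological boundary of B, and let H^{d−1} denote the (d−1)-dimensional Hausdorff measure on ℝ^d. Assume the unit-cell trace inequality: there exists c₀ > 0 such that for every continuously differentiable function v : ℝ^d → ℝ, ∫_{∂B} |v|² dH^{d−1} ≤ c₀ ( ∫_Y |v|² dx + ∫_Y |∇v|² dx ). Then for every ε > 0 and every continuously differentiable function u : ℝ^d → ℝ, ∫_{Σ_ε} |u|² dH^{d−1} ≤ c₀ ( ε^{−1} ∫_{Ω_ε} |u|² dx + ε ∫_{Ω_ε} |∇u|² dx ). -/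

import Mathlib

open MeasureTheory Filter Topology

noncomputable section

/-- The closed unit cube `[0,1]^d` in `ℝ^d`. -/
def closedUnitCube (d : ℕ) : Set (EuclideanSpace ℝ (Fin d)) :=
  WithLp.ofLp ⁻¹' (Set.univ.pi fun _ => Set.Icc (0 : ℝ) 1)

/-- The open unit cube `(0,1)^d` in `ℝ^d`. -/
def openUnitCube (d : ℕ) : Set (EuclideanSpace ℝ (Fin d)) :=
  WithLp.ofLp ⁻¹' (Set.univ.pi fun _ => Set.Ioo (0 : ℝ) 1)

/-- The integer vector `i ∈ ℤ^d` viewed as a point of `ℝ^d`. -/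
def intVec {d : ℕ} (i : Fin d → ℤ) : EuclideanSpace ℝ (Fin d) :=
  WithLp.toLp 2 (fun t => (i t : ℝ))

/-- The set `ε · (i + S)` for `S ⊆ ℝ^d`, `i ∈ ℤ^d`, `ε > 0`. -/
def epsCell {d : ℕ} (ε : ℝ) (i : Fin d → ℤ) (S : Set (EuclideanSpace ℝ (Fin d))) :
    Set (EuclideanSpace ℝ (Fin d)) :=
  (fun y => ε • (intVec i + y)) '' S

/-- The index set `I_ε = { i ∈ ℤ^d : ε·(i + [0,1]^d) ⊆ Ω }`. -/
def indexSet {d : ℕ} (Ω : Set (EuclideanSpace ℝ (Fin d))) (ε : ℝ) : Set (Fin d → ℤ) :=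
  {i | epsCell ε i (closedUnitCube d) ⊆ Ω}

/-- The perforated domain `Ω_ε = Ω \ ⋃_{i ∈ I_ε} ε·(i + B)`. -/
def perfDomain {d : ℕ} (Ω B : Set (EuclideanSpace ℝ (Fin d))) (ε : ℝ) :
    Set (EuclideanSpace ℝ (Fin d)) :=
  Ω \ ⋃ i ∈ indexSet Ω ε, epsCell ε i B

/-- The perforated periodicity cell `Y = (0,1)^d \ B`. -/
def perfCell {d : ℕ} (B : Set (EuclideanSpace ℝ (Fin d))) :
    Set (EuclideanSpace ℝ (Fin d)) :=
  openUnitCube d \ B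

/-- The hole boundaries `Σ_ε = ⋃_{i ∈ I_ε} ε·(i + ∂B)`. -/
def holeBoundaries {d : ℕ} (Ω B : Set (EuclideanSpace ℝ (Fin d))) (ε : ℝ) :
    Set (EuclideanSpace ℝ (Fin d)) :=
  ⋃ i ∈ indexSet Ω ε, epsCell ε i (frontier B)

/-!
Each hole `ε • (i + B)` is the image of `B` under the homothety `y ↦ ε • (i + y)`, which
multiplies `H^{d-1}` by `ε^{d-1}`, volume by `ε^d` and gradients of pulled-back functions by `ε`.
Applying the cell inequality to `u` pulled back along this map therefore gives the claimed
inequality for a single cell, with the weights `ε⁻¹` and `ε`. The cells `ε • (i + Y)`, `i ∈ I_ε`,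
are finitely many, pairwise disjoint and contained in `Ω_ε`, so summing over them concludes.
-/

open Set Pointwise Function
open scoped ENNReal

section ChangeOfVariables

variable {α β E : Type*} [MeasurableSpace α] [MeasurableSpace β]
  [NormedAddCommGroup E] [NormedSpace ℝ E]

theorem MeasurableEmbedding.setIntegral_image_of_measure_image {μ : Measure α} {ν : Measure β}
    {T : α → β} (hT : MeasurableEmbedding T) {κ : ℝ≥0∞} (hκ : ∀ A, ν (T '' A) = κ * μ A)
    (S : Set α) (g : β → E) :
    ∫ x in T '' S, g x ∂ν = κ.toReal • ∫ y in S, g (T y) ∂μ := by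
  have hrestrict : ν.restrict (T '' S) = κ • (μ.restrict S).map T := by
    ext A hA
    rw [Measure.restrict_apply hA, Measure.smul_apply, hT.map_apply,
      Measure.restrict_apply (hT.measurable hA), ← image_preimage_inter, hκ, smul_eq_mul]
  rw [hrestrict, integral_smul_measure, hT.integral_map]

end ChangeOfVariables

section NonnegIntegrals

variable {α ι : Type*} [MeasurableSpace α] {μ : Measure α} {f : α → ℝ} {s : Finset ι}
  {t : ι → Set α}

theorem setIntegral_biUnion_finset_le_sum (hf : 0 ≤ f) (ht : ∀ i ∈ s, MeasurableSet (t i))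
    (hdisj : (s : Set ι).Pairwise (Disjoint on t)) :
    ∫ x in ⋃ i ∈ s, t i, f x ∂μ ≤ ∑ i ∈ s, ∫ x in t i, f x ∂μ := by
  by_cases hfi : IntegrableOn f (⋃ i ∈ s, t i) μ
  · exact (integral_biUnion_finset s ht hdisj fun i hi =>
      hfi.mono_set (subset_biUnion_of_mem (u := t) hi)).le
  · rw [integral_undef hfi]
    exact Finset.sum_nonneg fun i _ => integral_nonneg hf

theorem sum_setIntegral_le_setIntegral (hf : 0 ≤ f) (ht : ∀ i ∈ s, MeasurableSet (t i))
    (hdisj : (s : Set ι).Pairwise (Disjoint on t)) {U : Set α} (htU : ∀ i ∈ s, t i ⊆ U)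
    (hfU : IntegrableOn f U μ) :
    ∑ i ∈ s, ∫ x in t i, f x ∂μ ≤ ∫ x in U, f x ∂μ := by
  rw [← integral_biUnion_finset s ht hdisj fun i hi => hfU.mono_set (htU i hi)]
  exact setIntegral_mono_set hfU (Eventually.of_forall fun x => hf x)
    (iUnion₂_subset htU).eventuallyLE

end NonnegIntegrals

theorem Continuous.integrableOn_of_isBounded {X E : Type*} [MetricSpace X] [ProperSpace X]
    [MeasurableSpace X] [OpensMeasurableSpace X] {μ : Measure X} [IsLocallyFiniteMeasure μ]
    [NormedAddCommGroup E] {f : X → E} (hf : Continuous f) {U : Set X} (hU : Bornology.IsBounded U) :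
    IntegrableOn f U μ :=
  (hf.continuousOn.integrableOn_compact hU.isCompact_closure).mono_set subset_closure

section Gradient

variable {F : Type*} [NormedAddCommGroup F] [InnerProductSpace ℝ F] [CompleteSpace F]

theorem gradient_comp_smul_add (u : F → ℝ) (c : ℝ) (a y : F) :
    gradient (fun z => u (c • (a + z))) y = c • gradient u (c • (a + y)) := by
  simp only [gradient]
  rw [fderiv_comp_add_left (f := fun w => u (c • w)), fderiv_comp_smul, map_smulₛₗ]
  rfl

theorem ContDiff.continuous_gradient {u : F → ℝ} (hu : ContDiff ℝ 1 u) :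
    Continuous (gradient u) :=
  (InnerProductSpace.toDual ℝ F).symm.continuous.comp (hu.continuous_fderiv one_ne_zero)

end Gradient

theorem measurableEmbedding_smul_add {E : Type*} [NormedAddCommGroup E] [NormedSpace ℝ E]
    [MeasurableSpace E] [BorelSpace E] {c : ℝ} (hc : c ≠ 0) (a : E) :
    MeasurableEmbedding fun y => c • (a + y) :=
  ((Homeomorph.addLeft a).trans (Homeomorph.smulOfNeZero c hc)).measurableEmbedding

namespace PeriodicCells

variable {d : ℕ}

theorem epsCell_eq_smul_vadd (ε : ℝ) (i : Fin d → ℤ) (S : Set (EuclideanSpace ℝ (Fin d))) :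
    epsCell ε i S = ε • (intVec i +ᵥ S) := by
  rw [epsCell, ← image_vadd, ← image_smul, image_image]
  rfl

theorem hausdorffMeasure_epsCell {ε : ℝ} (hε : 0 < ε) (i : Fin d → ℤ) {r : ℝ} (hr : 0 ≤ r)
    (A : Set (EuclideanSpace ℝ (Fin d))) :
    μH[r] (epsCell ε i A) = ENNReal.ofReal (ε ^ r) * μH[r] A := by
  rw [epsCell_eq_smul_vadd, Measure.hausdorffMeasure_smul₀ hr hε.ne',
    hausdorffMeasure_vadd _ (Or.inl hr), ENNReal.smul_def, smul_eq_mul,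
    Real.nnnorm_of_nonneg hε.le, ← ENNReal.ofReal_coe_nnreal, NNReal.coe_rpow]
  rfl

theorem volume_epsCell {ε : ℝ} (hε : 0 < ε) (i : Fin d → ℤ)
    (A : Set (EuclideanSpace ℝ (Fin d))) :
    volume (epsCell ε i A) = ENNReal.ofReal (ε ^ d) * volume A := by
  rw [epsCell_eq_smul_vadd, Measure.addHaar_smul_of_nonneg volume hε.le,
    finrank_euclideanSpace_fin, measure_vadd]

theorem measurableSet_epsCell {ε : ℝ} (hε : 0 < ε) (i : Fin d → ℤ)
    {S : Set (EuclideanSpace ℝ (Fin d))} (hS : MeasurableSet S) :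
    MeasurableSet (epsCell ε i S) :=
  (measurableEmbedding_smul_add hε.ne' (intVec i)).measurableSet_image.2 hS

theorem isOpen_openUnitCube : IsOpen (openUnitCube d) :=
  (isOpen_set_pi finite_univ fun _ _ => isOpen_Ioo).preimage (PiLp.continuous_ofLp 2 _)

theorem floor_apply_of_mem_openUnitCube {y : EuclideanSpace ℝ (Fin d)}
    (hy : y ∈ openUnitCube d) (i : Fin d → ℤ) (t : Fin d) :
    ⌊(intVec i + y) t⌋ = i t := by
  have hyt : y t ∈ Ioo (0 : ℝ) 1 := hy t (mem_univ t)
  simp [intVec, Int.floor_intCast_add, Int.floor_eq_zero_iff.2 (Ioo_subset_Ico_self hyt)]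

theorem disjoint_epsCell {ε : ℝ} (hε : 0 < ε) {i j : Fin d → ℤ} (hij : i ≠ j)
    {S S' : Set (EuclideanSpace ℝ (Fin d))} (hS : S ⊆ openUnitCube d)
    (hS' : S' ⊆ openUnitCube d) :
    Disjoint (epsCell ε i S) (epsCell ε j S') := by
  rw [disjoint_left]
  rintro _ ⟨y, hy, rfl⟩ ⟨z, hz, hzy⟩
  refine hij (funext fun t => ?_)
  rw [← floor_apply_of_mem_openUnitCube (hS hy) i t, ← floor_apply_of_mem_openUnitCube (hS' hz) j t,
    smul_right_injective _ hε.ne' hzy]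

theorem indexSet_finite {Ω : Set (EuclideanSpace ℝ (Fin d))} (hΩ : Bornology.IsBounded Ω)
    {ε : ℝ} (hε : 0 < ε) : (indexSet Ω ε).Finite := by
  obtain ⟨R, hR0, hR⟩ := hΩ.exists_pos_norm_le
  have hbdd : Bornology.IsBounded (indexSet Ω ε) := by
    refine isBounded_iff_forall_norm_le.2 ⟨R / ε, fun i hi => ?_⟩
    have hεi : ‖ε • intVec i‖ ≤ R := by
      simpa using hR _ (hi ⟨0, fun t _ => by simp, rfl⟩)
    rw [norm_smul, Real.norm_of_nonneg hε.le] at hεi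
    refine (pi_norm_le_iff_of_nonneg (by positivity)).2 fun t => ?_
    rw [le_div_iff₀' hε, ← Int.norm_cast_real]
    exact (mul_le_mul_of_nonneg_left (PiLp.norm_apply_le (intVec i) t) hε.le).trans hεi
  exact (Metric.isCompact_of_isClosed_isBounded (isClosed_discrete _) hbdd).finite_of_discrete

theorem epsCell_perfCell_subset_perfDomain {Ω B : Set (EuclideanSpace ℝ (Fin d))}
    (hB : B ⊆ openUnitCube d) {ε : ℝ} (hε : 0 < ε) {i : Fin d → ℤ} (hi : i ∈ indexSet Ω ε) :
    epsCell ε i (perfCell B) ⊆ perfDomain Ω B ε := by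
  rintro _ ⟨y, hy, rfl⟩
  refine ⟨hi ⟨y, fun t ht => Ioo_subset_Icc_self (hy.1 t ht), rfl⟩, ?_⟩
  simp only [mem_iUnion, not_exists]
  intro j _ hj
  obtain rfl | hij := eq_or_ne i j
  · obtain ⟨b, hb, hby⟩ := hj
    exact hy.2 ((measurableEmbedding_smul_add hε.ne' (intVec i)).injective hby ▸ hb)
  · exact disjoint_left.1 (disjoint_epsCell hε hij sdiff_subset hB) ⟨y, hy, rfl⟩ hj

theorem trace_inequality_epsCell (hd : 1 ≤ d) {Γ Y : Set (EuclideanSpace ℝ (Fin d))} {c₀ : ℝ}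
    (htrace : ∀ v : EuclideanSpace ℝ (Fin d) → ℝ, ContDiff ℝ 1 v →
      ∫ x in Γ, v x ^ 2 ∂μH[(d : ℝ) - 1] ≤
        c₀ * ((∫ x in Y, v x ^ 2) + ∫ x in Y, ‖gradient v x‖ ^ 2))
    {ε : ℝ} (hε : 0 < ε) (i : Fin d → ℤ) {u : EuclideanSpace ℝ (Fin d) → ℝ}
    (hu : ContDiff ℝ 1 u) :
    ∫ x in epsCell ε i Γ, u x ^ 2 ∂μH[(d : ℝ) - 1] ≤
      c₀ * (ε⁻¹ * (∫ x in epsCell ε i Y, u x ^ 2) +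
        ε * ∫ x in epsCell ε i Y, ‖gradient u x‖ ^ 2) := by
  set T : EuclideanSpace ℝ (Fin d) → EuclideanSpace ℝ (Fin d) := fun y => ε • (intVec i + y)
  have hT := measurableEmbedding_smul_add hε.ne' (intVec i)
  have hr : (0 : ℝ) ≤ d - 1 := by simpa using (Nat.one_le_cast (α := ℝ)).2 hd
  have hΓ := hT.setIntegral_image_of_measure_image (hausdorffMeasure_epsCell hε i hr) Γ
    fun x => u x ^ 2
  have hY := hT.setIntegral_image_of_measure_image (volume_epsCell hε i) Y fun x => u x ^ 2
  have hY' := hT.setIntegral_image_of_measure_image (volume_epsCell hε i) Y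
    fun x => ‖gradient u x‖ ^ 2
  have hgrad : ∀ y, ‖gradient (u ∘ T) y‖ ^ 2 = ε ^ 2 * ‖gradient u (T y)‖ ^ 2 := fun y => by
    rw [comp_def, gradient_comp_smul_add, norm_smul, mul_pow, Real.norm_eq_abs, sq_abs]
  have hcell := htrace (u ∘ T) (hu.comp ((contDiff_const.add contDiff_id).const_smul ε))
  simp only [comp_apply, hgrad, integral_const_mul] at hcell
  change ∫ x in T '' Γ, u x ^ 2 ∂μH[(d : ℝ) - 1] ≤
      c₀ * (ε⁻¹ * (∫ x in T '' Y, u x ^ 2) + ε * ∫ x in T '' Y, ‖gradient u x‖ ^ 2)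
  rw [hΓ, hY, hY', ENNReal.toReal_ofReal (by positivity), ENNReal.toReal_ofReal (by positivity),
    smul_eq_mul, smul_eq_mul, smul_eq_mul, Real.rpow_sub hε, Real.rpow_one, Real.rpow_natCast]
  calc ε ^ d / ε * ∫ y in Γ, u (T y) ^ 2 ∂μH[(d : ℝ) - 1]
      ≤ ε ^ d / ε * (c₀ * ((∫ y in Y, u (T y) ^ 2) +
          ε ^ 2 * ∫ y in Y, ‖gradient u (T y)‖ ^ 2)) := by gcongr
    _ = c₀ * (ε⁻¹ * (ε ^ d * ∫ y in Y, u (T y) ^ 2) +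
          ε * (ε ^ d * ∫ y in Y, ‖gradient u (T y)‖ ^ 2)) := by
      field_simp

end PeriodicCells

open PeriodicCells in
theorem rescaled_trace_inequality_general
    (d : ℕ) (hd : 1 ≤ d) (Ω B : Set (EuclideanSpace ℝ (Fin d)))
    (hΩbdd : Bornology.IsBounded Ω)
    (hBcompact : IsCompact B) (hBsub : B ⊆ openUnitCube d)
    (c₀ : ℝ) (hc₀ : 0 < c₀)
    (htrace : ∀ v : EuclideanSpace ℝ (Fin d) → ℝ, ContDiff ℝ 1 v →
      ∫ x in frontier B, (v x) ^ 2 ∂(μH[(d : ℝ) - 1]) ≤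
        c₀ * ((∫ x in perfCell B, (v x) ^ 2) +
          ∫ x in perfCell B, ‖gradient v x‖ ^ 2)) :
    ∀ ε : ℝ, 0 < ε → ∀ u : EuclideanSpace ℝ (Fin d) → ℝ, ContDiff ℝ 1 u →
      ∫ x in holeBoundaries Ω B ε, (u x) ^ 2 ∂(μH[(d : ℝ) - 1]) ≤
        c₀ * (ε⁻¹ * (∫ x in perfDomain Ω B ε, (u x) ^ 2) +
          ε * ∫ x in perfDomain Ω B ε, ‖gradient u x‖ ^ 2) := by
  intro ε hε u hu
  obtain ⟨I, hI⟩ := (indexSet_finite hΩbdd hε).exists_finset_coe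
  have hholes : holeBoundaries Ω B ε = ⋃ i ∈ I, epsCell ε i (frontier B) := by
    rw [holeBoundaries, ← hI, Finset.set_biUnion_coe]
  have hcells : ∀ i ∈ I, epsCell ε i (perfCell B) ⊆ perfDomain Ω B ε := fun i hi =>
    epsCell_perfCell_subset_perfDomain hBsub hε (hI ▸ Finset.mem_coe.2 hi)
  have hY : ∀ i ∈ I, MeasurableSet (epsCell ε i (perfCell B)) := fun i _ =>
    measurableSet_epsCell hε i (isOpen_openUnitCube.measurableSet.diff hBcompact.measurableSet)
  have hdisjY : (I : Set (Fin d → ℤ)).Pairwise (Disjoint on fun i => epsCell ε i (perfCell B)) :=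
    fun i _ j _ hij => disjoint_epsCell hε hij sdiff_subset sdiff_subset
  have hbdd : Bornology.IsBounded (perfDomain Ω B ε) := hΩbdd.subset sdiff_subset
  have hfrontier : frontier B ⊆ openUnitCube d :=
    hBcompact.isClosed.frontier_subset.trans hBsub
  calc ∫ x in holeBoundaries Ω B ε, u x ^ 2 ∂μH[(d : ℝ) - 1]
      ≤ ∑ i ∈ I, ∫ x in epsCell ε i (frontier B), u x ^ 2 ∂μH[(d : ℝ) - 1] :=
        hholes ▸ setIntegral_biUnion_finset_le_sum (fun x => sq_nonneg _)
          (fun i _ => measurableSet_epsCell hε i isClosed_frontier.measurableSet)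
          fun i _ j _ hij => disjoint_epsCell hε hij hfrontier hfrontier
    _ ≤ ∑ i ∈ I, c₀ * (ε⁻¹ * (∫ x in epsCell ε i (perfCell B), u x ^ 2) +
          ε * ∫ x in epsCell ε i (perfCell B), ‖gradient u x‖ ^ 2) :=
        Finset.sum_le_sum fun i _ => trace_inequality_epsCell hd htrace hε i hu
    _ = c₀ * (ε⁻¹ * ∑ i ∈ I, (∫ x in epsCell ε i (perfCell B), u x ^ 2) +
          ε * ∑ i ∈ I, ∫ x in epsCell ε i (perfCell B), ‖gradient u x‖ ^ 2) := by
        simp only [Finset.mul_sum, ← Finset.sum_add_distrib]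
    _ ≤ c₀ * (ε⁻¹ * (∫ x in perfDomain Ω B ε, u x ^ 2) +
          ε * ∫ x in perfDomain Ω B ε, ‖gradient u x‖ ^ 2) := by
        gcongr <;> refine sum_setIntegral_le_setIntegral (fun x => sq_nonneg _) hY hdisjY hcells
          (Continuous.integrableOn_of_isBounded ?_ hbdd)
        exacts [hu.continuous.pow 2, hu.continuous_gradient.norm.pow 2]

/-- **Rescaled trace inequality.** Assuming the trace inequality
`∫_{∂B} |v|² dH^{d-1} ≤ c₀ (∫_Y |v|² + ∫_Y |∇v|²)` on the reference cell, for every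
`ε > 0` and every `C¹` function `u` one has
`∫_{Σ_ε} |u|² dH^{d-1} ≤ c₀ (ε⁻¹ ∫_{Ω_ε} |u|² + ε ∫_{Ω_ε} |∇u|²)`. -/
theorem rescaled_trace_inequality
    (d : ℕ) (hd : 1 ≤ d) (Ω B : Set (EuclideanSpace ℝ (Fin d)))
    (hΩne : Ω.Nonempty) (hΩopen : IsOpen Ω) (hΩbdd : Bornology.IsBounded Ω)
    (hBcompact : IsCompact B) (hBsub : B ⊆ openUnitCube d)
    (c₀ : ℝ) (hc₀ : 0 < c₀)
    (htrace : ∀ v : EuclideanSpace ℝ (Fin d) → ℝ, ContDiff ℝ 1 v →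
      ∫ x in frontier B, (v x) ^ 2 ∂(μH[(d : ℝ) - 1]) ≤
        c₀ * ((∫ x in perfCell B, (v x) ^ 2) +
          ∫ x in perfCell B, ‖gradient v x‖ ^ 2)) :
    ∀ ε : ℝ, 0 < ε → ∀ u : EuclideanSpace ℝ (Fin d) → ℝ, ContDiff ℝ 1 u →
      ∫ x in holeBoundaries Ω B ε, (u x) ^ 2 ∂(μH[(d : ℝ) - 1]) ≤
        c₀ * (ε⁻¹ * (∫ x in perfDomain Ω B ε, (u x) ^ 2) +
          ε * ∫ x in perfDomain Ω B ε, ‖gradient u x‖ ^ 2) :=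
  rescaled_trace_inequality_general d hd Ω B hΩbdd hBcompact hBsub c₀ hc₀ htrace

end
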